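/- Let D be a weakly self-orthogonal 1-design with block size k odd and all block intersection numbers odd. Let G act with all point orbits of length w and block orbits of lengths b_1,…,b_m, all of these odd numbers. Let O be the orbit matrix. Then the rows of the binary matrix [O | 𝟏] (O mod 2 augmented by the all-one column) span a binary self-orthogonal code of length v/w + 1. -/

import Mathlib

/-!
Fix a block `x` in the block orbit `B_s`, and for each block orbit `B_t` let `deg_t p` be the
number of blocks of `B_t` through the point `p`; it is constant on point orbits. Counting flags
between `B_t` and the point orbit `V_j` gives `b_t · O[t,j] = w · deg_t(V_j)`, so
`O[t,j] ≡ deg_t(V_j)` mod 2. Counting the triples `(p, x')` with `p ∈ x ∩ x'`, `x' ∈ B_t`, gives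
`∑_j O[s,j] · deg_t(V_j) = ∑_{x' ∈ B_t} |x ∩ x'|`, a sum of `b_t` odd numbers. Hence
`O[s] · O[t] ≡ 1`, and the all-one column makes every inner product even.
-/

open Matrix Finset MulAction

theorem sum_sum_eq_sum_of_existsUnique_mem {ι α M : Type*} [Fintype ι] [DecidableEq ι]
    [Fintype α] [AddCommMonoid M] {V : ι → Finset α} (hV : ∀ a, ∃! i, a ∈ V i) (f : α → M) :
    ∑ i, ∑ a ∈ V i, f a = ∑ a, f a := by
  choose idx hidx huniq using hV
  have hV_eq : ∀ i, V i = univ.filter (idx · = i) := fun i => by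
    ext a
    simp only [mem_filter, mem_univ, true_and]
    exact ⟨fun h => (huniq a i h).symm, fun h => h ▸ hidx a⟩
  simp_rw [hV_eq]
  exact sum_fiberwise univ idx f

theorem Matrix.dotProduct_eq_zero_of_mem_span {R ι : Type*} [CommSemiring R] [Fintype ι]
    {S : Set (ι → R)} (hS : ∀ u ∈ S, ∀ v ∈ S, u ⬝ᵥ v = 0) {x y : ι → R}
    (hx : x ∈ Submodule.span R S) (hy : y ∈ Submodule.span R S) : x ⬝ᵥ y = 0 := by
  induction hx, hy using Submodule.span_induction₂ with
  | mem_mem u v hu hv => exact hS u hu v hv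
  | zero_left | zero_right => simp
  | add_left u v z _ _ _ hu hv => rw [add_dotProduct, hu, hv, add_zero]
  | add_right u v z _ _ _ hu hv => rw [dotProduct_add, hu, hv, add_zero]
  | smul_left c u v _ _ h => rw [smul_dotProduct, h, smul_zero]
  | smul_right c u v _ _ h => rw [dotProduct_smul, h, smul_zero]

theorem Matrix.sumElim_one_dotProduct_sumElim_one {ι : Type*} [Fintype ι]
    {a b : ι → ZMod 2} (h : a ⬝ᵥ b = 1) :
    Sum.elim a (fun _ : Fin 1 => 1) ⬝ᵥ Sum.elim b (fun _ => 1) = 0 := by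
  simp only [dotProduct, Fintype.sum_sum_type, Sum.elim_inl, Sum.elim_inr]
  rw [← dotProduct, h]
  decide

namespace MulAction

theorem apply_eq_of_mem_orbit {M α β : Type*} [Monoid M] [MulAction M α] {f : α → β}
    (hf : ∀ (g : M) a, f (g • a) = f a) {a b : α} (h : b ∈ orbit M a) : f b = f a := by
  obtain ⟨g, rfl⟩ := h
  exact hf g a

theorem smul_mem_of_coe_eq_orbit {M α : Type*} [Monoid M] [MulAction M α] {S : Finset α}
    {a : α} (hS : (S : Set α) = orbit M a) (g : M) {x : α} (hx : x ∈ S) : g • x ∈ S := by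
  rw [← mem_coe, hS] at hx ⊢
  exact mem_orbit_of_mem_orbit g hx

end MulAction

section InvariantIncidence

variable {G P B : Type*} [Group G] [MulAction G P] [MulAction G B]
  {Inc : B → P → Prop} [∀ x, DecidablePred (Inc x)]

theorem card_bipartiteBelow_smul (hInc : ∀ (g : G) x p, Inc x p ↔ Inc (g • x) (g • p))
    {T : Finset B} (hT : ∀ (g : G), ∀ x ∈ T, g • x ∈ T) (g : G) (p : P) :
    #(T.bipartiteBelow Inc (g • p)) = #(T.bipartiteBelow Inc p) := by
  apply card_nbij' (g⁻¹ • ·) (g • ·)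
  · intro x hx
    simp only [mem_coe, mem_bipartiteBelow] at hx ⊢
    refine ⟨hT g⁻¹ x hx.1, ?_⟩
    rw [hInc g, smul_inv_smul]
    exact hx.2
  · intro x hx
    simp only [mem_coe, mem_bipartiteBelow] at hx ⊢
    exact ⟨hT g x hx.1, (hInc g x p).1 hx.2⟩
  · intro x _
    exact smul_inv_smul g x
  · intro x _
    exact inv_smul_smul g x

theorem card_bipartiteBelow_eq_of_mem_orbit
    (hInc : ∀ (g : G) x p, Inc x p ↔ Inc (g • x) (g • p))
    {T : Finset B} (hT : ∀ (g : G), ∀ x ∈ T, g • x ∈ T) {p₀ p : P} (hp : p ∈ orbit G p₀) :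
    #(T.bipartiteBelow Inc p) = #(T.bipartiteBelow Inc p₀) :=
  apply_eq_of_mem_orbit (f := fun p => #(T.bipartiteBelow Inc p))
    (card_bipartiteBelow_smul hInc hT) hp

theorem card_mul_eq_card_orbit_mul_card_bipartiteBelow
    (hInc : ∀ (g : G) x p, Inc x p ↔ Inc (g • x) (g • p))
    {T : Finset B} (hT : ∀ (g : G), ∀ x ∈ T, g • x ∈ T)
    {V : Finset P} {p₀ : P} (hV : (V : Set P) = orbit G p₀)
    {o : ℕ} (ho : ∀ x ∈ T, #(V.bipartiteAbove Inc x) = o) :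
    #T * o = #V * #(T.bipartiteBelow Inc p₀) := by
  have hdeg : ∀ p ∈ V, #(T.bipartiteBelow Inc p) = #(T.bipartiteBelow Inc p₀) :=
    fun p hp => card_bipartiteBelow_eq_of_mem_orbit hInc hT (by rwa [← hV, mem_coe])
  calc #T * o = ∑ x ∈ T, #(V.bipartiteAbove Inc x) := by
        rw [sum_congr rfl ho, sum_const, smul_eq_mul]
    _ = ∑ p ∈ V, #(T.bipartiteBelow Inc p) :=
        sum_card_bipartiteAbove_eq_sum_card_bipartiteBelow Inc
    _ = #V * #(T.bipartiteBelow Inc p₀) := by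
        rw [sum_congr rfl hdeg, sum_const, smul_eq_mul]

end InvariantIncidence

theorem sum_card_inter_eq_sum_mul {P B ι : Type*} [Fintype P] [Fintype ι] [DecidableEq ι]
    {Inc : B → P → Prop} [∀ x, DecidablePred (Inc x)] {V : ι → Finset P}
    (hV : ∀ p, ∃! i, p ∈ V i) (T : Finset B) {c : ι → ℕ}
    (hc : ∀ i, ∀ p ∈ V i, #(T.bipartiteBelow Inc p) = c i) (x : B) :
    ∑ x' ∈ T, #{p | Inc x p ∧ Inc x' p} = ∑ i, #((V i).bipartiteAbove Inc x) * c i := by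
  calc ∑ x' ∈ T, #{p | Inc x p ∧ Inc x' p}
      = ∑ x' ∈ T, #(({p | Inc x p} : Finset P).bipartiteAbove Inc x') := by
        simp only [bipartiteAbove, filter_filter]
    _ = ∑ p ∈ ({p | Inc x p} : Finset P), #(T.bipartiteBelow Inc p) :=
        sum_card_bipartiteAbove_eq_sum_card_bipartiteBelow Inc
    _ = ∑ i, ∑ p ∈ V i, if Inc x p then #(T.bipartiteBelow Inc p) else 0 := by
        rw [sum_filter, sum_sum_eq_sum_of_existsUnique_mem hV]
    _ = ∑ i, #((V i).bipartiteAbove Inc x) * c i := by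
        refine sum_congr rfl fun i _ => ?_
        rw [← sum_filter, sum_congr rfl fun p hp => hc i p (mem_filter.1 hp).1, sum_const,
          smul_eq_mul]
        rfl

theorem stmt14_general {P B G : Type*} [Fintype P] [Group G]
    [MulAction G P] [MulAction G B]
    (Inc : B → P → Prop) [∀ x, DecidablePred (Inc x)]
    (hGInc : ∀ (g : G) (x : B) (pt : P), Inc x pt ↔ Inc (g • x) (g • pt))
    (k : ℕ)
    (hk : ∀ x : B, (Finset.univ.filter (fun pt => Inc x pt)).card = k)
    (hkodd : Odd k)
    (hint : ∀ x x' : B, x ≠ x' →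
      Odd (Finset.univ.filter (fun pt => Inc x pt ∧ Inc x' pt)).card)
    (n m w : ℕ) (Vo : Fin n → Finset P) (Bo : Fin m → Finset B) (bL : Fin m → ℕ)
    (hVo : ∀ j, ∃ pt, (Vo j : Set P) = MulAction.orbit G pt)
    (hVpart : ∀ pt : P, ∃! j, pt ∈ Vo j)
    (hVw : ∀ j, (Vo j).card = w)
    (hBo : ∀ i, ∃ x, (Bo i : Set B) = MulAction.orbit G x)
    (hBL : ∀ i, (Bo i).card = bL i)
    (hwodd : Odd w) (hbodd : ∀ i, Odd (bL i))
    (O : Matrix (Fin m) (Fin n) ℕ)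
    (hO : ∀ i j, ∀ x ∈ Bo i, O i j = ((Vo j).filter (fun pt => Inc x pt)).card)
    (A : Fin m → (Fin n ⊕ Fin 1) → ZMod 2)
    (hA : A = fun i => Sum.elim (fun j => ((O i j : ℕ) : ZMod 2)) (fun _ => 1)) :
    ∀ x ∈ Submodule.span (ZMod 2) (Set.range A),
      ∀ y ∈ Submodule.span (ZMod 2) (Set.range A), x ⬝ᵥ y = 0 := by
  classical
  choose p₀ hp₀ using hVo
  have hBinv : ∀ i (g : G), ∀ x ∈ Bo i, g • x ∈ Bo i := fun i =>
    smul_mem_of_coe_eq_orbit (hBo i).choose_spec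
  have hO_deg : ∀ t j, (O t j : ZMod 2) = #((Bo t).bipartiteBelow Inc (p₀ j)) := by
    intro t j
    have h := card_mul_eq_card_orbit_mul_card_bipartiteBelow hGInc (hBinv t) (hp₀ j)
      fun x hx => (hO t j x hx).symm
    simpa [hBL, hVw, (hbodd t).natCast_zmod_two, hwodd.natCast_zmod_two] using
      congrArg (Nat.cast : ℕ → ZMod 2) h
  have hinter : ∀ x x' : B, (#{p | Inc x p ∧ Inc x' p} : ZMod 2) = 1 := by
    intro x x'
    rcases eq_or_ne x x' with rfl | hne
    · simpa [hk] using hkodd.natCast_zmod_two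
    · exact (hint x x' hne).natCast_zmod_two
  have hrows : ∀ s t, (fun j => (O s j : ZMod 2)) ⬝ᵥ (fun j => (O t j : ZMod 2)) = 1 := by
    intro s t
    obtain ⟨x, hx⟩ := card_pos.1 (hBL s ▸ (hbodd s).pos)
    have hcount := sum_card_inter_eq_sum_mul hVpart (Bo t)
      (fun j p hp => card_bipartiteBelow_eq_of_mem_orbit hGInc (hBinv t)
        (by rwa [← hp₀ j, mem_coe])) x
    calc (fun j => (O s j : ZMod 2)) ⬝ᵥ (fun j => (O t j : ZMod 2))
        = ((∑ j, #((Vo j).bipartiteAbove Inc x) * #((Bo t).bipartiteBelow Inc (p₀ j)) : ℕ)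
            : ZMod 2) := by
          simp only [dotProduct]
          push_cast
          exact sum_congr rfl fun j _ => by rw [hO s j x hx, hO_deg t j]; rfl
      _ = ∑ x' ∈ Bo t, (#{p | Inc x p ∧ Inc x' p} : ZMod 2) := by rw [← hcount]; push_cast; rfl
      _ = 1 := by
          simp [hinter, hBL, (hbodd t).natCast_zmod_two]
  refine fun x hx y hy => dotProduct_eq_zero_of_mem_span ?_ hx hy
  rintro _ ⟨s, rfl⟩ _ ⟨t, rfl⟩
  subst hA
  exact sumElim_one_dotProduct_sumElim_one (hrows s t)

/-- For a weakly self-orthogonal 1-design with k odd and all block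
intersection numbers odd, and a group acting with all point orbits of length w and
block orbits of lengths b_1,…,b_m, all odd, the rows of [O | 𝟏] over F_2 span a
binary self-orthogonal code of length v/w + 1. -/
theorem stmt14 {P B G : Type*} [Fintype P] [Fintype B] [Group G]
    [MulAction G P] [MulAction G B]
    (Inc : B → P → Prop) [∀ x, DecidablePred (Inc x)]
    (hGInc : ∀ (g : G) (x : B) (pt : P), Inc x pt ↔ Inc (g • x) (g • pt))
    (k r : ℕ)
    (hk : ∀ x : B, (Finset.univ.filter (fun pt => Inc x pt)).card = k)
    (hr : ∀ pt : P, (Finset.univ.filter (fun x => Inc x pt)).card = r)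
    (hkodd : Odd k)
    (hint : ∀ x x' : B, x ≠ x' →
      Odd (Finset.univ.filter (fun pt => Inc x pt ∧ Inc x' pt)).card)
    (n m w : ℕ) (Vo : Fin n → Finset P) (Bo : Fin m → Finset B) (bL : Fin m → ℕ)
    (hVo : ∀ j, ∃ pt, (Vo j : Set P) = MulAction.orbit G pt)
    (hVpart : ∀ pt : P, ∃! j, pt ∈ Vo j)
    (hVw : ∀ j, (Vo j).card = w)
    (hBo : ∀ i, ∃ x, (Bo i : Set B) = MulAction.orbit G x)
    (hBpart : ∀ x : B, ∃! i, x ∈ Bo i)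
    (hBL : ∀ i, (Bo i).card = bL i)
    (hwodd : Odd w) (hbodd : ∀ i, Odd (bL i))
    (hnw : n * w = Fintype.card P)
    (O : Matrix (Fin m) (Fin n) ℕ)
    (hO : ∀ i j, ∀ x ∈ Bo i, O i j = ((Vo j).filter (fun pt => Inc x pt)).card)
    (A : Fin m → (Fin n ⊕ Fin 1) → ZMod 2)
    (hA : A = fun i => Sum.elim (fun j => ((O i j : ℕ) : ZMod 2)) (fun _ => 1)) :
    ∀ x ∈ Submodule.span (ZMod 2) (Set.range A),
      ∀ y ∈ Submodule.span (ZMod 2) (Set.range A), x ⬝ᵥ y = 0 :=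
  stmt14_general Inc hGInc k hk hkodd hint n m w Vo Bo bL hVo hVpart hVw hBo hBL hwodd hbodd O hO A
    hA
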